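/- With G = G_1 × ... × G_k acting on V = V_1 ⊕ ... ⊕ V_k as above and P a parabolic subgroup with components P_i = G_i(Fix_{V_i}(P)), the normaliser satisfies N_G(P) = N_{G_1}(P_1) × N_{G_2}(P_2) × ... × N_{G_k}(P_k). Consequently, if H_i is a complement to P_i in N_{G_i}(P_i) for each i, then H_1 × ... × H_k is a complement to P in N_G(P). -/

import Mathlib

open Module Submodule

variable {V : Type*} [NormedAddCommGroup V] [InnerProductSpace ℂ V] [FiniteDimensional ℂ V]

def pointStab (G : Subgroup (V ≃ₗᵢ[ℂ] V)) (X : Set V) : Subgroup (V ≃ₗᵢ[ℂ] V) where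
  carrier := {g | g ∈ G ∧ ∀ x ∈ X, g x = x}
  one_mem' := ⟨G.one_mem, fun x _ => rfl⟩
  mul_mem' := by
    rintro a b ⟨ha, ha'⟩ ⟨hb, hb'⟩
    refine ⟨G.mul_mem ha hb, fun x hx => ?_⟩
    have : (a * b) x = a (b x) := rfl
    rw [this, hb' x hx, ha' x hx]
  inv_mem' := by
    rintro a ⟨ha, ha'⟩
    refine ⟨G.inv_mem ha, fun x hx => ?_⟩
    have h1 : a⁻¹ (a x) = x := a.symm_apply_apply x
    rw [ha' x hx] at h1
    exact h1

def fixedBy (g : V ≃ₗᵢ[ℂ] V) : Submodule ℂ V where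
  carrier := {v | g v = v}
  zero_mem' := map_zero g
  add_mem' := fun ha hb => by rw [Set.mem_setOf] at *; rw [map_add, ha, hb]
  smul_mem' := fun c v hv => by rw [Set.mem_setOf] at *; rw [map_smul, hv]

def IsReflection (g : V ≃ₗᵢ[ℂ] V) : Prop :=
  IsOfFinOrder g ∧ finrank ℂ (fixedBy g) = finrank ℂ V - 1

def IsReflectionGroup (G : Subgroup (V ≃ₗᵢ[ℂ] V)) : Prop :=
  Subgroup.closure {g | g ∈ G ∧ IsReflection g} = G

def fixedSpace (P : Subgroup (V ≃ₗᵢ[ℂ] V)) : Submodule ℂ V where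
  carrier := {v | ∀ g ∈ P, g v = v}
  zero_mem' := fun g _ => map_zero g
  add_mem' := fun ha hb g hg => by rw [map_add, ha g hg, hb g hg]
  smul_mem' := fun c v hv g hg => by rw [map_smul, hv g hg]

def IsIrreducibleGroup (G : Subgroup (V ≃ₗᵢ[ℂ] V)) : Prop :=
  ∀ U : Submodule ℂ V, (∀ g ∈ G, ∀ v ∈ U, g v ∈ U) → U = ⊥ ∨ U = ⊤

variable {k : ℕ} {W : Fin k → Type*} [∀ i, NormedAddCommGroup (W i)]
  [∀ i, InnerProductSpace ℂ (W i)] [∀ i, FiniteDimensional ℂ (W i)]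

/-- The monoid homomorphism assembling a family of unitary transformations of the `W i`
into a unitary transformation of the orthogonal direct sum `PiLp 2 W`. -/
noncomputable def prodHom : (∀ i, W i ≃ₗᵢ[ℂ] W i) →* (PiLp 2 W ≃ₗᵢ[ℂ] PiLp 2 W) where
  toFun g := LinearIsometryEquiv.piLpCongrRight 2 g
  map_one' := rfl
  map_mul' := fun a b => rfl

/-- The isometric embedding of the `i`-th summand into the direct sum. -/
noncomputable def sing (i : Fin k) : W i →ₗ[ℂ] PiLp 2 W :=
  (WithLp.linearEquiv 2 ℂ (∀ j, W j)).symm.toLinearMap ∘ₗ LinearMap.single ℂ W i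

/-- `Fix_{W i}(P)`: the vectors of the `i`-th summand fixed by every element of `P`. -/
def fixIn (P : Subgroup (PiLp 2 W ≃ₗᵢ[ℂ] PiLp 2 W)) (i : Fin k) : Submodule ℂ (W i) where
  carrier := {v | ∀ h ∈ P, h (sing i v) = sing i v}
  zero_mem' := fun h _ => by rw [map_zero, map_zero]
  add_mem' := fun ha hb h hh => by rw [map_add, map_add, ha h hh, hb h hh]
  smul_mem' := fun c v hv h hh => by rw [map_smul, map_smul, hv h hh]


def normIn {V : Type*} [NormedAddCommGroup V] [InnerProductSpace ℂ V] [FiniteDimensional ℂ V]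
    (G P : Subgroup (V ≃ₗᵢ[ℂ] V)) : Subgroup (V ≃ₗᵢ[ℂ] V) :=
  G ⊓ Subgroup.normalizer (P : Set (V ≃ₗᵢ[ℂ] V))

/-- `H` is a complement to `P` in `N`: a subgroup of `N` meeting `P` trivially with `PH = N`. -/
def IsParabolicComplement {V : Type*} [NormedAddCommGroup V] [InnerProductSpace ℂ V]
    [FiniteDimensional ℂ V] (P N H : Subgroup (V ≃ₗᵢ[ℂ] V)) : Prop :=
  H ⊓ P = ⊥ ∧ P ⊔ H = N


section Aux

variable {k : ℕ} {W : Fin k → Type*} [∀ i, NormedAddCommGroup (W i)]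
  [∀ i, InnerProductSpace ℂ (W i)] [∀ i, FiniteDimensional ℂ (W i)]

lemma prodHom_apply' (g : ∀ i, W i ≃ₗᵢ[ℂ] W i) (x : PiLp 2 W) (i : Fin k) :
    prodHom g x i = g i (x i) := rfl

lemma sing_apply' (i : Fin k) (v : W i) (j : Fin k) : sing i v j = Pi.single i v j := rfl

lemma prodHom_injective : Function.Injective (prodHom (W := W)) := by
  intro a b h
  funext i
  ext v
  have := congrArg (fun f : PiLp 2 W ≃ₗᵢ[ℂ] PiLp 2 W => f (sing i v) i) h
  simpa [prodHom_apply', sing_apply'] using this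

lemma mem_map_prodHom_iff {H : ∀ i, Subgroup (W i ≃ₗᵢ[ℂ] W i)}
    {g : ∀ i, W i ≃ₗᵢ[ℂ] W i} :
    prodHom g ∈ Subgroup.map prodHom (Subgroup.pi Set.univ H) ↔ ∀ i, g i ∈ H i := by
  constructor
  · rintro ⟨m, hm, hmg⟩
    have : m = g := prodHom_injective hmg
    subst this
    exact fun i => (Subgroup.mem_pi _).1 hm i (Set.mem_univ i)
  · intro h
    exact ⟨g, (Subgroup.mem_pi _).2 fun i _ => h i, rfl⟩

/-- Every element of the image of `prodHom` comes from a unique tuple. -/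
lemma exists_of_mem_map {H : ∀ i, Subgroup (W i ≃ₗᵢ[ℂ] W i)}
    {n : PiLp 2 W ≃ₗᵢ[ℂ] PiLp 2 W} (hn : n ∈ Subgroup.map prodHom (Subgroup.pi Set.univ H)) :
    ∃ m : ∀ i, W i ≃ₗᵢ[ℂ] W i, (∀ i, m i ∈ H i) ∧ prodHom m = n := by
  obtain ⟨m, hm, rfl⟩ := hn
  exact ⟨m, fun i => (Subgroup.mem_pi _).1 hm i (Set.mem_univ i), rfl⟩

lemma mem_pointStab_iff {V : Type*} [NormedAddCommGroup V] [InnerProductSpace ℂ V]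
    [FiniteDimensional ℂ V] {G : Subgroup (V ≃ₗᵢ[ℂ] V)} {X : Set V} {g} :
    g ∈ pointStab G X ↔ g ∈ G ∧ ∀ x ∈ X, g x = x := Iff.rfl

lemma mem_fixIn_iff {P : Subgroup (PiLp 2 W ≃ₗᵢ[ℂ] PiLp 2 W)} {i : Fin k} {v : W i} :
    v ∈ fixIn P i ↔ ∀ h ∈ P, h (sing i v) = sing i v := Iff.rfl

/-- Key structural lemma: a parabolic subgroup of a product decomposes as the product of
its components. -/
lemma parabolic_decomp (Gfam : ∀ i, Subgroup (W i ≃ₗᵢ[ℂ] W i))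
    (P : Subgroup (PiLp 2 W ≃ₗᵢ[ℂ] PiLp 2 W))
    (hP : ∃ X : Set (PiLp 2 W),
      P = pointStab (Subgroup.map prodHom (Subgroup.pi Set.univ Gfam)) X)
    (Pfam : ∀ i, Subgroup (W i ≃ₗᵢ[ℂ] W i))
    (hPfam : ∀ i, Pfam i = pointStab (Gfam i) (fixIn P i)) :
    P = Subgroup.map prodHom (Subgroup.pi Set.univ Pfam) := by
  obtain ⟨X, hX⟩ := hP
  ext n
  constructor
  · intro hn
    have hn' := hn
    rw [hX, mem_pointStab_iff] at hn'
    obtain ⟨m, hm, rfl⟩ := exists_of_mem_map hn'.1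
    refine (mem_map_prodHom_iff).2 fun i => ?_
    rw [hPfam i, mem_pointStab_iff]
    refine ⟨hm i, fun v hv => ?_⟩
    have hv' : prodHom m (sing i v) = sing i v := (mem_fixIn_iff).1 hv _ hn
    have := congrArg (fun x : PiLp 2 W => x i) hv'
    simpa [prodHom_apply', sing_apply'] using this
  · intro hn
    obtain ⟨m, hm, rfl⟩ := exists_of_mem_map hn
    have hm' : ∀ i, m i ∈ Gfam i ∧ ∀ v ∈ (fixIn P i : Set (W i)), m i v = v := by
      intro i
      have := hm i
      rw [hPfam i, mem_pointStab_iff] at this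
      exact this
    rw [hX, mem_pointStab_iff]
    refine ⟨(mem_map_prodHom_iff).2 fun i => (hm' i).1, fun x hx => ?_⟩
    -- each component of x lies in `fixIn P i`
    have hcomp : ∀ i, x i ∈ fixIn P i := by
      intro i
      rw [mem_fixIn_iff]
      intro h hh
      have hh' := hh
      rw [hX, mem_pointStab_iff] at hh'
      obtain ⟨q, hq, rfl⟩ := exists_of_mem_map hh'.1
      have hfix : prodHom q x = x := hh'.2 x hx
      ext j
      rcases eq_or_ne j i with rfl | hji
      · have := congrArg (fun y : PiLp 2 W => y j) hfix
        simpa [prodHom_apply', sing_apply'] using this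
      · simp [prodHom_apply', sing_apply', Pi.single_eq_of_ne hji]
    ext i
    have := (hm' i).2 (x i) (hcomp i)
    simpa [prodHom_apply'] using this

/-- A product decomposition for the normalizer membership of an image element. -/
lemma prodHom_mem_normalizer_iff (Pfam : ∀ i, Subgroup (W i ≃ₗᵢ[ℂ] W i))
    (m : ∀ i, W i ≃ₗᵢ[ℂ] W i) :
    prodHom m ∈ Subgroup.normalizer ((Subgroup.map prodHom (Subgroup.pi Set.univ Pfam) : Set (PiLp 2 W ≃ₗᵢ[ℂ] PiLp 2 W))) ↔
      ∀ i, m i ∈ Subgroup.normalizer (Pfam i : Set (W i ≃ₗᵢ[ℂ] W i)) := by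
  rw [Subgroup.mem_normalizer_iff]
  constructor
  · intro h i
    rw [Subgroup.mem_normalizer_iff]
    intro q
    set s : ∀ j, W j ≃ₗᵢ[ℂ] W j := Pi.mulSingle i q with hs
    have := h (prodHom s)
    rw [mem_map_prodHom_iff] at this
    have hconj : prodHom m * prodHom s * (prodHom m)⁻¹ =
        prodHom (m * s * m⁻¹) := by
      rw [map_mul, map_mul, map_inv]
    rw [hconj, mem_map_prodHom_iff] at this
    constructor
    · intro hq
      have h1 : ∀ j, s j ∈ Pfam j := by
        intro j
        rcases eq_or_ne j i with rfl | hji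
        · simpa [hs] using hq
        · simp [hs, Pi.mulSingle_apply, hji, Subgroup.one_mem]
      have := this.1 h1 i
      simpa [hs] using this
    · intro hq
      have h1 : ∀ j, (m * s * m⁻¹) j ∈ Pfam j := by
        intro j
        rcases eq_or_ne j i with rfl | hji
        · simpa [hs] using hq
        · simp [hs, Pi.mulSingle_apply, hji, Subgroup.one_mem]
      have := this.2 h1 i
      simpa [hs] using this
  · intro h n
    constructor
    · intro hn
      obtain ⟨p, hp, rfl⟩ := exists_of_mem_map hn
      have : prodHom m * prodHom p * (prodHom m)⁻¹ = prodHom (m * p * m⁻¹) := by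
        rw [map_mul, map_mul, map_inv]
      rw [this, mem_map_prodHom_iff]
      intro i
      exact ((Subgroup.mem_normalizer_iff).1 (h i) (p i)).1 (hp i)
    · intro hn
      have hmem : prodHom m * n * (prodHom m)⁻¹ ∈
          Subgroup.map prodHom (Subgroup.pi Set.univ Pfam) := hn
      obtain ⟨q, hq, hqe⟩ := exists_of_mem_map hmem
      have hne : n = (prodHom m)⁻¹ * prodHom q * prodHom m := by
        rw [hqe]; group
      have : (prodHom m)⁻¹ * prodHom q * prodHom m = prodHom (m⁻¹ * q * m) := by
        rw [map_mul, map_mul, map_inv]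
      rw [hne, this, mem_map_prodHom_iff]
      intro i
      have hmi : (m i)⁻¹ ∈ Subgroup.normalizer (Pfam i : Set (W i ≃ₗᵢ[ℂ] W i)) := Subgroup.inv_mem _ (h i)
      have := ((Subgroup.mem_normalizer_iff).1 hmi (q i)).1 (hq i)
      simpa [mul_assoc] using this

lemma mem_sup_of_le_normalizer {G : Type*} [Group G] {P H : Subgroup G}
    (hH : H ≤ Subgroup.normalizer (P : Set G)) {n : G} (hn : n ∈ P ⊔ H) :
    ∃ p ∈ P, ∃ h ∈ H, n = p * h := by
  let K : Subgroup G :=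
    { carrier := {x | ∃ p ∈ P, ∃ h ∈ H, x = p * h}
      one_mem' := ⟨1, P.one_mem, 1, H.one_mem, by simp⟩
      mul_mem' := by
        rintro a b ⟨p1, hp1, h1, hh1, rfl⟩ ⟨p2, hp2, h2, hh2, rfl⟩
        refine ⟨p1 * (h1 * p2 * h1⁻¹), ?_, h1 * h2, H.mul_mem hh1 hh2, by group⟩
        exact P.mul_mem hp1 (((Subgroup.mem_normalizer_iff).1 (hH hh1) p2).1 hp2)
      inv_mem' := by
        rintro a ⟨p, hp, h, hh, rfl⟩
        refine ⟨h⁻¹ * p⁻¹ * h, ?_, h⁻¹, H.inv_mem hh, by group⟩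
        have := ((Subgroup.mem_normalizer_iff).1 (hH (H.inv_mem hh)) p⁻¹).1 (P.inv_mem hp)
        simpa [mul_assoc] using this }
  have hPK : P ≤ K := fun p hp => ⟨p, hp, 1, H.one_mem, by simp⟩
  have hHK : H ≤ K := fun h hh => ⟨1, P.one_mem, h, hh, by simp⟩
  exact (sup_le hPK hHK) hn

end Aux

/-- for `G = G₁ × ⋯ × G_k` acting on `V = V₁ ⊕ ⋯ ⊕ V_k` and `P` a parabolic
subgroup with components `P i = G_i(Fix_{V_i}(P))`, the normaliser of `P` in `G` is the
product of the normalisers `N_{G_i}(P_i)`, and a product of complements is a complement. -/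
theorem normalizer_and_complement_over_product
    (Gfam : ∀ i, Subgroup (W i ≃ₗᵢ[ℂ] W i)) [∀ i, Finite (Gfam i)]
    (hG : ∀ i, IsReflectionGroup (Gfam i)) (hirr : ∀ i, IsIrreducibleGroup (Gfam i))
    (P : Subgroup (PiLp 2 W ≃ₗᵢ[ℂ] PiLp 2 W))
    (hP : ∃ X : Set (PiLp 2 W),
      P = pointStab (Subgroup.map prodHom (Subgroup.pi Set.univ Gfam)) X)
    (Pfam : ∀ i, Subgroup (W i ≃ₗᵢ[ℂ] W i))
    (hPfam : ∀ i, Pfam i = pointStab (Gfam i) (fixIn P i)) :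
    normIn (Subgroup.map prodHom (Subgroup.pi Set.univ Gfam)) P =
      Subgroup.map prodHom (Subgroup.pi Set.univ fun i => normIn (Gfam i) (Pfam i)) ∧
    ∀ Hfam : ∀ i, Subgroup (W i ≃ₗᵢ[ℂ] W i),
      (∀ i, IsParabolicComplement (Pfam i) (normIn (Gfam i) (Pfam i)) (Hfam i)) →
      IsParabolicComplement P
        (normIn (Subgroup.map prodHom (Subgroup.pi Set.univ Gfam)) P)
        (Subgroup.map prodHom (Subgroup.pi Set.univ Hfam)) := by
  have hPdec := parabolic_decomp Gfam P hP Pfam hPfam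
  have hPleG : ∀ i, Pfam i ≤ Gfam i := fun i => by
    rw [hPfam i]; exact fun g hg => hg.1
  have hnorm : normIn (Subgroup.map prodHom (Subgroup.pi Set.univ Gfam)) P =
      Subgroup.map prodHom (Subgroup.pi Set.univ fun i => normIn (Gfam i) (Pfam i)) := by
    ext n
    rw [normIn, Subgroup.mem_inf]
    constructor
    · rintro ⟨hnG, hnN⟩
      obtain ⟨m, hm, rfl⟩ := exists_of_mem_map hnG
      rw [hPdec] at hnN
      have := (prodHom_mem_normalizer_iff Pfam m).1 hnN
      exact mem_map_prodHom_iff.2 fun i => Subgroup.mem_inf.2 ⟨hm i, this i⟩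
    · intro hn
      obtain ⟨m, hm, rfl⟩ := exists_of_mem_map hn
      refine ⟨mem_map_prodHom_iff.2 fun i => (Subgroup.mem_inf.1 (hm i)).1, ?_⟩
      rw [hPdec]
      exact (prodHom_mem_normalizer_iff Pfam m).2 fun i => (Subgroup.mem_inf.1 (hm i)).2
  refine ⟨hnorm, fun Hfam hH => ?_⟩
  have hHleN : ∀ i, Hfam i ≤ normIn (Gfam i) (Pfam i) := fun i =>
    le_sup_right.trans (le_of_eq (hH i).2)
  constructor
  · -- trivial intersection
    rw [eq_bot_iff]
    intro x hx
    obtain ⟨hxH, hxP⟩ := Subgroup.mem_inf.1 hx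
    obtain ⟨h, hh, rfl⟩ := exists_of_mem_map hxH
    rw [hPdec] at hxP
    have hp := mem_map_prodHom_iff.1 hxP
    have hone : h = 1 := by
      funext i
      have hmem : h i ∈ Hfam i ⊓ Pfam i := Subgroup.mem_inf.2 ⟨hh i, hp i⟩
      rw [(hH i).1] at hmem
      exact Subgroup.mem_bot.1 hmem
    rw [hone, map_one]
    exact Subgroup.one_mem ⊥
  · -- sup equals normalizer
    apply le_antisymm
    · apply sup_le
      · rw [normIn]
        refine le_inf ?_ Subgroup.le_normalizer
        rw [hPdec]
        exact Subgroup.map_mono (fun x hx i a => hPleG i (hx i a))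
      · rw [hnorm]
        exact Subgroup.map_mono (fun x hx i a => hHleN i (hx i a))
    · rw [hnorm]
      intro n hn
      obtain ⟨m, hm, rfl⟩ := exists_of_mem_map hn
      have hdec : ∀ i, ∃ p ∈ Pfam i, ∃ h ∈ Hfam i, m i = p * h := by
        intro i
        have hHn : Hfam i ≤ Subgroup.normalizer (Pfam i : Set (W i ≃ₗᵢ[ℂ] W i)) :=
          (hHleN i).trans inf_le_right
        have : m i ∈ Pfam i ⊔ Hfam i := by rw [(hH i).2]; exact hm i
        exact mem_sup_of_le_normalizer hHn this
      choose p hp h hhm hmph using hdec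
      have hm' : m = fun i => p i * h i := funext hmph
      have : prodHom m = prodHom p * prodHom h := by
        rw [hm']; exact map_mul prodHom p h
      rw [this]
      refine Subgroup.mul_mem _ (Subgroup.mem_sup_left ?_) (Subgroup.mem_sup_right ?_)
      · rw [hPdec]
        exact mem_map_prodHom_iff.2 hp
      · exact mem_map_prodHom_iff.2 hhm
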